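/- arXiv:0910.5394 — 2 statements merged into one kernel-verified Lean document; each statement's English description precedes it below -/
import Mathlib

section
/- Let D_{ij} = {x ∈ ℝ^{(d+1)n} : |x_i − x_j| ≥ x̆_i + x̆_j} (i ≠ j), and let x be a configuration with |x_i − x_j| = x̆_i + x̆_j > 0. Then the open ball of radius x̆_i + x̆_j centered at x − (x̆_i + x̆_j) n_{ij}(x) is disjoint from D_{ij}; equivalently, for every y ∈ D_{ij}, (y − x)·n_{ij}(x) + |y − x|²/(2(x̆_i + x̆_j)) ≥ 0. In particular, since x̆_i + x̆_j ≥ 2r_- on A_g, D_{ij} has the Uniform Exterior Sphere property restricted to A_g with constant 2r_-. -/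
open scoped RealInnerProductSpace

noncomputable section

variable {H : Type*} [NormedAddCommGroup H] [InnerProductSpace ℝ H]

/-- The set `N^D_{x,α}` of inward unit normal vectors to `D` at `x` with constant `α`. -/
def normalSet (D : Set H) (x : H) (α : ℝ) : Set H :=
  {v | ‖v‖ = 1 ∧ Metric.ball (x - α • v) α ∩ D = ∅}

/-- The set `N^D_x = ⋃_{α>0} N^D_{x,α}` of inward unit normal vectors to `D` at `x`. -/
def normalCone (D : Set H) (x : H) : Set H :=
  ⋃ α ∈ Set.Ioi (0 : ℝ), normalSet D x α

/-- `D` satisfies the Uniform Exterior Sphere property with constant `α`. -/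
def UES (D : Set H) (α : ℝ) : Prop :=
  ∀ x ∈ frontier D, normalCone D x = normalSet D x α ∧ (normalSet D x α).Nonempty

/-- `D` satisfies the Uniform Normal Cone property with constants `β`, `δ`. -/
def UNC (D : Set H) (β δ : ℝ) : Prop :=
  ∀ x ∈ frontier D, ∃ l : H, ‖l‖ = 1 ∧
    ∀ y ∈ frontier D, ‖y - x‖ ≤ δ → ∀ v ∈ normalCone D y, ⟪v, l⟫ ≥ Real.sqrt (1 - β ^ 2)

/-- The configuration space `ℝ^{(d+1)n}` of `n` globules in `ℝ^d`: each globule is a pair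
(center, radius), and the whole space carries the Euclidean (`L²`) norm. -/
abbrev GConf (d n : ℕ) : Type :=
  PiLp 2 (fun _ : Fin n => WithLp 2 (EuclideanSpace ℝ (Fin d) × ℝ))

variable {d n : ℕ}

/-- Center of the `i`-th globule. -/
def gC (x : GConf d n) (i : Fin n) : EuclideanSpace ℝ (Fin d) := (x i).fst

/-- Radius of the `i`-th globule. -/
def gR (x : GConf d n) (i : Fin n) : ℝ := (x i).snd

/-- Build a configuration from a family of (center, radius) pairs. -/
def mkG (f : Fin n → EuclideanSpace ℝ (Fin d) × ℝ) : GConf d n :=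
  (WithLp.equiv 2 _).symm fun i => (WithLp.equiv 2 _).symm (f i)

/-- The set `A_g` of allowed globule configurations: all radii lie in `[r₋, r₊]` and the
globules are pairwise non-intersecting. -/
def Ag (d n : ℕ) (rm rp : ℝ) : Set (GConf d n) :=
  {x | (∀ i, rm ≤ gR x i ∧ gR x i ≤ rp) ∧
    ∀ i j, i ≠ j → ‖gC x i - gC x j‖ ≥ gR x i + gR x j}

/-- The unit normal vector `n_{ij}(x)` to the collision constraint `|x_i−x_j| ≥ x̆_i+x̆_j`,
at a configuration `x` with `|x_i−x_j| = x̆_i+x̆_j > 0`. -/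
def nij (x : GConf d n) (i j : Fin n) : GConf d n :=
  mkG fun k =>
    if k = i then ((2 * (gR x i + gR x j))⁻¹ • (gC x i - gC x j), -(1 / 2 : ℝ))
    else if k = j then ((2 * (gR x i + gR x j))⁻¹ • (gC x j - gC x i), -(1 / 2 : ℝ))
    else 0

/-- The unit normal vector `n_{i+}` to the constraint `x̆_i ≤ r₊`: its only nonzero component
is the radius component of globule `i`, equal to `−1`. -/
def nplus (d n : ℕ) (i : Fin n) : GConf d n :=
  mkG fun k => if k = i then (0, (-1 : ℝ)) else 0

/-- The unit normal vector `n_{i−}` to the constraint `x̆_i ≥ r₋`: its only nonzero component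
is the radius component of globule `i`, equal to `1`. -/
def nminus (d n : ℕ) (i : Fin n) : GConf d n :=
  mkG fun k => if k = i then (0, (1 : ℝ)) else 0

end

/-- The hard-core constraint set `D_{ij} = {x : |x_i − x_j| ≥ x̆_i + x̆_j}`. -/
def Dij (d n : ℕ) (i j : Fin n) : Set (GConf d n) :=
  {x | ‖gC x i - gC x j‖ ≥ gR x i + gR x j}

/-!
Write `s = x̆_i + x̆_j`, `c = x_i − x_j` (so `|c| = s`), and for `y ∈ D_{ij}` put
`w = (y − x)_i − (y − x)_j`, `t = (y̆ − x̆)_i + (y̆ − x̆)_j`. Then `2s (y − x)·n_{ij} = w·c − s t`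
and `2|y − x|² ≥ |w|² + t²`, while `y ∈ D_{ij}` reads `s + t ≤ |w + c|`. Expanding `|w + c|²`
reduces the inequality to `r² + τ² ≥ 2s²` for `r = |w + c|`, `τ = t − s`, which follows from
`r − τ ≥ 2s ≥ 0`. The inequality says exactly that the ball of radius `s` centred at `x − s n_{ij}`
misses `D_{ij}`, and that ball contains the internally tangent ball of radius `2r₋ ≤ s`.
-/

section InnerProductSpace

variable {E : Type*} [NormedAddCommGroup E] [InnerProductSpace ℝ E]

lemma two_mul_inner_sub_mul_add_sq_nonneg {w c : E} {t : ℝ} (h : ‖c‖ + t ≤ ‖w + c‖) :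
    0 ≤ 2 * (⟪w, c⟫ - ‖c‖ * t) + ‖w‖ ^ 2 + t ^ 2 := by
  have hwc : ‖w + c‖ ^ 2 = ‖w‖ ^ 2 + 2 * ⟪w, c⟫ + ‖c‖ ^ 2 := norm_add_sq_real w c
  nlinarith [sq_nonneg (‖w + c‖ + t - ‖c‖), norm_nonneg c,
    mul_nonneg (norm_nonneg c) (sub_nonneg.2 h)]

lemma ball_sub_smul_inter_eq_empty {D : Set E} {x v : E} {α : ℝ} (hv : ‖v‖ = 1)
    (h : ∀ y ∈ D, 0 ≤ 2 * α * ⟪y - x, v⟫ + ‖y - x‖ ^ 2) :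
    Metric.ball (x - α • v) α ∩ D = ∅ := by
  refine Set.eq_empty_of_forall_notMem fun y ⟨hball, hy⟩ => ?_
  rw [Metric.mem_ball, dist_eq_norm, sub_sub_eq_add_sub, add_sub_right_comm] at hball
  have hsq : ‖y - x + α • v‖ ^ 2 = ‖y - x‖ ^ 2 + 2 * α * ⟪y - x, v⟫ + α ^ 2 := by
    rw [norm_add_sq_real, real_inner_smul_right, norm_smul, hv, Real.norm_eq_abs, mul_one,
      sq_abs]
    ring
  nlinarith [h y hy, norm_nonneg (y - x + α • v)]

lemma ball_sub_smul_subset {x v : E} {α s : ℝ} (hv : ‖v‖ = 1) (hαs : α ≤ s) :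
    Metric.ball (x - α • v) α ⊆ Metric.ball (x - s • v) s := by
  refine Metric.ball_subset_ball' (le_of_eq ?_)
  rw [dist_eq_norm, sub_sub_sub_cancel_left, ← sub_smul, norm_smul, hv, mul_one,
    Real.norm_eq_abs, abs_of_nonneg (sub_nonneg.2 hαs)]
  ring

end InnerProductSpace

section Globules

variable {d n : ℕ}

@[simp] lemma gC_mkG (f : Fin n → EuclideanSpace ℝ (Fin d) × ℝ) (k : Fin n) :
    gC (mkG f) k = (f k).1 := rfl

@[simp] lemma gR_mkG (f : Fin n → EuclideanSpace ℝ (Fin d) × ℝ) (k : Fin n) :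
    gR (mkG f) k = (f k).2 := rfl

@[simp] lemma gC_sub (x y : GConf d n) (k : Fin n) : gC (x - y) k = gC x k - gC y k := rfl

@[simp] lemma gR_sub (x y : GConf d n) (k : Fin n) : gR (x - y) k = gR x k - gR y k := rfl

lemma inner_eq_sum_gC_gR (z w : GConf d n) :
    ⟪z, w⟫ = ∑ k, (⟪gC z k, gC w k⟫ + gR z k * gR w k) := by
  rw [PiLp.inner_apply]
  simp [WithLp.prod_inner_apply, gC, gR, RCLike.inner_apply, mul_comm]

lemma inner_nij (x z : GConf d n) {i j : Fin n} (hij : i ≠ j) :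
    ⟪z, nij x i j⟫ = (2 * (gR x i + gR x j))⁻¹ * ⟪gC z i - gC z j, gC x i - gC x j⟫
      - (gR z i + gR z j) / 2 := by
  have hsupp : ∀ k ∈ Finset.univ, k ∉ ({i, j} : Finset (Fin n)) →
      ⟪gC z k, gC (nij x i j) k⟫ + gR z k * gR (nij x i j) k = 0 := by
    intro k _ hk
    simp only [Finset.mem_insert, Finset.mem_singleton, not_or] at hk
    simp [nij, hk.1, hk.2]
  rw [inner_eq_sum_gC_gR, ← Finset.sum_subset (Finset.subset_univ _) hsupp,
    Finset.sum_pair hij]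
  simp only [nij, gC_mkG, gR_mkG, if_neg hij.symm, if_true, real_inner_smul_right,
    ← neg_sub (gC x i) (gC x j), inner_neg_right, inner_sub_left]
  ring

lemma norm_nij (x : GConf d n) {i j : Fin n} (hij : i ≠ j)
    (hc : ‖gC x i - gC x j‖ = gR x i + gR x j) (hs : 0 < gR x i + gR x j) :
    ‖nij x i j‖ = 1 := by
  have hC : gC (nij x i j) i - gC (nij x i j) j = (gR x i + gR x j)⁻¹ • (gC x i - gC x j) := by
    simp only [nij, gC_mkG, if_neg hij.symm, if_true, ← neg_sub (gC x i) (gC x j),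
      smul_neg, sub_neg_eq_add, ← two_smul ℝ, smul_smul]
    congr 1
    field_simp
  have hR : gR (nij x i j) i + gR (nij x i j) j = -1 := by
    norm_num [nij, hij.symm]
  have hsq : ‖nij x i j‖ ^ 2 = 1 := by
    rw [← real_inner_self_eq_norm_sq, inner_nij x _ hij, hC, hR, real_inner_smul_left,
      real_inner_self_eq_norm_sq, hc]
    field_simp
    ring
  exact (pow_eq_one_iff_of_nonneg (norm_nonneg _) two_ne_zero).1 hsq

lemma norm_gC_sub_sq_add_gR_add_sq_le (z : GConf d n) {i j : Fin n} (hij : i ≠ j) :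
    ‖gC z i - gC z j‖ ^ 2 + (gR z i + gR z j) ^ 2 ≤ 2 * ‖z‖ ^ 2 := by
  have hpair : ‖gC z i‖ ^ 2 + gR z i ^ 2 + (‖gC z j‖ ^ 2 + gR z j ^ 2) ≤ ‖z‖ ^ 2 := by
    rw [← real_inner_self_eq_norm_sq z, inner_eq_sum_gC_gR]
    simp only [real_inner_self_eq_norm_sq, ← sq]
    rw [← Finset.sum_pair (f := fun k => ‖gC z k‖ ^ 2 + gR z k ^ 2) hij]
    exact Finset.sum_le_univ_sum_of_nonneg fun k => by positivity
  have hpar := parallelogram_law_with_norm ℝ (gC z i) (gC z j)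
  nlinarith [add_sq_le (a := gR z i) (b := gR z j), sq_nonneg ‖gC z i + gC z j‖]

lemma two_mul_inner_nij_add_norm_sq_nonneg {x y : GConf d n} {i j : Fin n} (hij : i ≠ j)
    (hc : ‖gC x i - gC x j‖ = gR x i + gR x j) (hs : 0 < gR x i + gR x j)
    (hy : y ∈ Dij d n i j) :
    0 ≤ 2 * (gR x i + gR x j) * ⟪y - x, nij x i j⟫ + ‖y - x‖ ^ 2 := by
  have hinner : 2 * (gR x i + gR x j) * ⟪y - x, nij x i j⟫
      = ⟪gC (y - x) i - gC (y - x) j, gC x i - gC x j⟫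
        - ‖gC x i - gC x j‖ * (gR (y - x) i + gR (y - x) j) := by
    rw [inner_nij x _ hij, hc]
    field_simp
  have hD : ‖gC x i - gC x j‖ + (gR (y - x) i + gR (y - x) j)
      ≤ ‖gC (y - x) i - gC (y - x) j + (gC x i - gC x j)‖ :=
    calc ‖gC x i - gC x j‖ + (gR (y - x) i + gR (y - x) j) = gR y i + gR y j := by
          simp only [gR_sub, hc]; ring
      _ ≤ ‖gC y i - gC y j‖ := hy
      _ = ‖gC (y - x) i - gC (y - x) j + (gC x i - gC x j)‖ := by
          simp only [gC_sub]; abel_nf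
  nlinarith [two_mul_inner_sub_mul_add_sq_nonneg hD,
    norm_gC_sub_sq_add_gR_add_sq_le (y - x) hij]

lemma ball_nij_inter_Dij_eq_empty {x : GConf d n} {i j : Fin n} (hij : i ≠ j)
    (hc : ‖gC x i - gC x j‖ = gR x i + gR x j) (hs : 0 < gR x i + gR x j) :
    Metric.ball (x - (gR x i + gR x j) • nij x i j) (gR x i + gR x j) ∩ Dij d n i j = ∅ :=
  ball_sub_smul_inter_eq_empty (norm_nij x hij hc hs)
    fun _ hy => two_mul_inner_nij_add_norm_sq_nonneg hij hc hs hy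

lemma inner_nij_add_norm_sq_div_nonneg {x y : GConf d n} {i j : Fin n} (hij : i ≠ j)
    (hc : ‖gC x i - gC x j‖ = gR x i + gR x j) (hs : 0 < gR x i + gR x j)
    (hy : y ∈ Dij d n i j) :
    0 ≤ ⟪y - x, nij x i j⟫ + ‖y - x‖ ^ 2 / (2 * (gR x i + gR x j)) := by
  have h2s : 0 < 2 * (gR x i + gR x j) := by positivity
  rw [← mul_nonneg_iff_of_pos_left h2s, mul_add, mul_div_cancel₀ _ h2s.ne']
  exact two_mul_inner_nij_add_norm_sq_nonneg hij hc hs hy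

end Globules

theorem stmt_11_general (d n : ℕ) (rm rp : ℝ)
    (h0 : 0 < rm) (i j : Fin n) (hij : i ≠ j) :
    (∀ x : GConf d n, ‖gC x i - gC x j‖ = gR x i + gR x j → 0 < gR x i + gR x j →
      Metric.ball (x - (gR x i + gR x j) • nij x i j) (gR x i + gR x j) ∩ Dij d n i j = ∅ ∧
      ∀ y ∈ Dij d n i j,
        ⟪y - x, nij x i j⟫ + ‖y - x‖ ^ 2 / (2 * (gR x i + gR x j)) ≥ 0) ∧
    ∀ x ∈ Ag d n rm rp, ‖gC x i - gC x j‖ = gR x i + gR x j →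
      Metric.ball (x - (2 * rm) • nij x i j) (2 * rm) ∩ Dij d n i j = ∅ := by
  refine ⟨fun x hc hs => ⟨ball_nij_inter_Dij_eq_empty hij hc hs,
    fun y hy => inner_nij_add_norm_sq_div_nonneg hij hc hs hy⟩, fun x hx hc => ?_⟩
  have hrm : 2 * rm ≤ gR x i + gR x j := by linarith [(hx.1 i).1, (hx.1 j).1]
  have hpos : 0 < gR x i + gR x j := by linarith
  exact Set.subset_eq_empty
    (Set.inter_subset_inter_left _ (ball_sub_smul_subset (norm_nij x hij hc hpos) hrm))
    (ball_nij_inter_Dij_eq_empty hij hc hpos)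

/-- If `|x_i − x_j| = x̆_i + x̆_j > 0` then the open ball of radius
`x̆_i + x̆_j` centered at `x − (x̆_i + x̆_j) n_{ij}(x)` is disjoint from `D_{ij}`; equivalently,
`(y − x)·n_{ij}(x) + |y − x|²/(2(x̆_i + x̆_j)) ≥ 0` for all `y ∈ D_{ij}`. In particular, since
`x̆_i + x̆_j ≥ 2r₋` on `A_g`, `D_{ij}` has the Uniform Exterior Sphere property restricted to
`A_g` with constant `2r₋`. -/
theorem stmt_11 (d n : ℕ) (hd : 2 ≤ d) (hn : 1 ≤ n) (rm rp : ℝ)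
    (h0 : 0 < rm) (hr : rm < rp) (i j : Fin n) (hij : i ≠ j) :
    (∀ x : GConf d n, ‖gC x i - gC x j‖ = gR x i + gR x j → 0 < gR x i + gR x j →
      Metric.ball (x - (gR x i + gR x j) • nij x i j) (gR x i + gR x j) ∩ Dij d n i j = ∅ ∧
      ∀ y ∈ Dij d n i j,
        ⟪y - x, nij x i j⟫ + ‖y - x‖ ^ 2 / (2 * (gR x i + gR x j)) ≥ 0) ∧
    ∀ x ∈ Ag d n rm rp, ‖gC x i - gC x j‖ = gR x i + gR x j →
      Metric.ball (x - (2 * rm) • nij x i j) (2 * rm) ∩ Dij d n i j = ∅ :=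
  stmt_11_general d n rm rp h0 i j hij
end

section
/- (Compatibility for the globules model.) For every x ∈ ∂A_g there exists a unit vector l ∈ ℝ^{(d+1)n} such that l·n_{ij}(x) ≥ r_- /(4 r_+ n √n) for every pair i ≠ j with |x_i − x_j| = x̆_i + x̆_j, l·n_{i+} ≥ r_- /(4 r_+ n √n) for every i with x̆_i = r_+, and l·n_{i−} ≥ r_- /(4 r_+ n √n) for every i with x̆_i = r_-. -/
open scoped RealInnerProductSpace

/-!
Anchor every cluster of touching globules at one of its centres `p_i`, and let `w` have centre
components `(2/r₋)(x_i - p_i)` and radius components `(2/(r₊ - r₋))((r₊ + r₋)/2 - x̆_i)`.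
Against `n_{i±}` at an active radius bound `w` gives exactly `1`. For a contact pair the two
globules share their anchor, so the centre part of `⟪w, n_{ij}⟫` is
`(2/r₋) |x_i - x_j|² / (2(x̆_i + x̆_j)) = (x̆_i + x̆_j)/r₋ ≥ 2`, while the radius part is at least
`-1`. Every centre is joined to its anchor by at most `n - 1` contacts of length `≤ 2r₊`, whence
`‖w‖ ≤ 4 r₊ n √n / r₋`, and `l = w / ‖w‖` does the job.
-/

theorem nontrivial_of_mem_frontier {X : Type*} [TopologicalSpace X] {s : Set X} {x : X}
    (hx : x ∈ frontier s) : Nontrivial X := by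
  by_contra h
  rw [not_nontrivial_iff_subsingleton] at h
  simp at hx

theorem exists_norm_eq_one_le_inner {H : Type*} [NormedAddCommGroup H] [InnerProductSpace ℝ H]
    [Nontrivial H] {w : H} {K : ℝ} (hw : ‖w‖ ≤ K) :
    ∃ l : H, ‖l‖ = 1 ∧ ∀ v, 1 ≤ ⟪w, v⟫ → 1 / K ≤ ⟪l, v⟫ := by
  rcases eq_or_ne w 0 with rfl | hw0
  · obtain ⟨l, hl⟩ := exists_norm_eq H zero_le_one
    exact ⟨l, hl, fun v hv => absurd hv (by simp)⟩
  · have hpos : 0 < ‖w‖ := norm_pos_iff.mpr hw0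
    refine ⟨‖w‖⁻¹ • w, norm_smul_inv_norm hw0, fun v hv => ?_⟩
    rw [real_inner_smul_left, ← one_div]
    calc 1 / K ≤ 1 / ‖w‖ := one_div_le_one_div_of_le hpos hw
      _ ≤ 1 / ‖w‖ * ⟪w, v⟫ := le_mul_of_one_le_right (by positivity) hv

theorem PiLp.norm_sq_le_card_mul {ι : Type*} [Fintype ι] {β : ι → Type*}
    [∀ i, SeminormedAddCommGroup (β i)] (v : PiLp 2 β) {C : ℝ} (h : ∀ i, ‖v i‖ ^ 2 ≤ C) :
    ‖v‖ ^ 2 ≤ Fintype.card ι * C := by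
  rw [PiLp.norm_sq_eq_of_L2, ← nsmul_eq_mul, ← Finset.card_univ, ← Finset.sum_const]
  exact Finset.sum_le_sum fun i _ => h i

namespace SimpleGraph

variable {V E : Type*} [SeminormedAddCommGroup E] {G : SimpleGraph V} {f : V → E} {K : ℝ}

theorem Walk.norm_sub_le_mul_length (hK : ∀ u v, G.Adj u v → ‖f u - f v‖ ≤ K) {u v : V}
    (w : G.Walk u v) : ‖f u - f v‖ ≤ K * w.length := by
  induction w with
  | nil => simp
  | @cons a b c h w ih =>
    rw [length_cons, Nat.cast_succ, mul_add_one]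
    linarith [norm_sub_le_norm_sub_add_norm_sub (f a) (f b) (f c), hK _ _ h]

theorem Reachable.norm_sub_le [Fintype V] (hK₀ : 0 ≤ K)
    (hK : ∀ u v, G.Adj u v → ‖f u - f v‖ ≤ K) {u v : V} (h : G.Reachable u v) :
    ‖f u - f v‖ ≤ K * (Fintype.card V - 1) := by
  classical
  obtain ⟨w⟩ := h
  have hlen : (w.toPath.1.length : ℝ) ≤ Fintype.card V - 1 :=
    le_sub_iff_add_le.mpr (by exact_mod_cast w.toPath.2.length_lt)
  calc ‖f u - f v‖ ≤ K * w.toPath.1.length := Walk.norm_sub_le_mul_length hK _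
    _ ≤ K * (Fintype.card V - 1) := by gcongr

end SimpleGraph

theorem natCast_mul_sq_add_one_le {n : ℕ} {R : ℝ} (hR : 1 ≤ R) :
    n * ((R * (n - 1)) ^ 2 + 1) ≤ (R * n * √n) ^ 2 := by
  rw [mul_pow (R * n), Real.sq_sqrt n.cast_nonneg]
  rcases n.eq_zero_or_pos with rfl | hn
  · simp
  · have hn' : (1 : ℝ) ≤ n := by exact_mod_cast hn
    nlinarith [mul_le_mul hR hR zero_le_one (by linarith)]

section Globules

variable {d n : ℕ}

theorem inner_mkG (f g : Fin n → EuclideanSpace ℝ (Fin d) × ℝ) :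
    ⟪(mkG f : GConf d n), mkG g⟫ = ∑ i, (⟪(f i).1, (g i).1⟫ + (f i).2 * (g i).2) := by
  simp [mkG, PiLp.inner_apply, WithLp.prod_inner_apply, mul_comm]

theorem isClosed_Ag (rm rp : ℝ) : IsClosed (Ag d n rm rp) := by
  have hR (i : Fin n) : Continuous fun x : GConf d n => gR x i := by unfold gR; fun_prop
  have hC (i : Fin n) : Continuous fun x : GConf d n => gC x i := by unfold gC; fun_prop
  simp only [Ag, ge_iff_le, Set.ofPred_and, Set.ofPred_forall]
  refine .inter (isClosed_iInter fun i => .inter ?_ ?_)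
    (isClosed_iInter fun i => isClosed_iInter fun j => isClosed_iInter fun _ => ?_)
  · exact isClosed_le continuous_const (hR i)
  · exact isClosed_le (hR i) continuous_const
  · exact isClosed_le ((hR i).add (hR j)) ((hC i).sub (hC j)).norm

def collisionGraph (x : GConf d n) : SimpleGraph (Fin n) where
  Adj i j := i ≠ j ∧ ‖gC x i - gC x j‖ = gR x i + gR x j
  symm := ⟨fun _ _ h => ⟨h.1.symm, by rw [norm_sub_rev, h.2, add_comm]⟩⟩
  loopless := ⟨fun _ h => h.1 rfl⟩

theorem exists_anchor_of_mem_Ag {rm rp : ℝ} (hrm : 0 ≤ rm) {x : GConf d n}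
    (hx : x ∈ Ag d n rm rp) :
    ∃ p : Fin n → EuclideanSpace ℝ (Fin d),
      (∀ i j, (collisionGraph x).Adj i j → p i = p j) ∧ ∀ i, ‖gC x i - p i‖ ≤ 2 * rp * (n - 1) := by
  let c i := ((collisionGraph x).connectedComponentMk i).out
  refine ⟨fun i => gC x (c i), fun i j h => ?_, fun i => ?_⟩
  · simp only [c, SimpleGraph.ConnectedComponent.sound h.reachable]
  · have hedge : ∀ i j, (collisionGraph x).Adj i j → ‖gC x i - gC x j‖ ≤ 2 * rp := by
      rintro i j ⟨-, h⟩
      rw [h]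
      linarith [(hx.1 i).2, (hx.1 j).2]
    have hreach : (collisionGraph x).Reachable i (c i) :=
      SimpleGraph.ConnectedComponent.eq.mp
        (((collisionGraph x).connectedComponentMk i).out_eq).symm
    simpa using hreach.norm_sub_le (by linarith [(hx.1 i).1, (hx.1 i).2]) hedge

def separatingDirection (x : GConf d n) (p : Fin n → EuclideanSpace ℝ (Fin d)) (μ ν m : ℝ) :
    GConf d n :=
  mkG fun i => (μ • (gC x i - p i), ν * (m - gR x i))

variable (x : GConf d n) (p : Fin n → EuclideanSpace ℝ (Fin d)) (μ ν m : ℝ)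

theorem inner_separatingDirection_nplus (i : Fin n) :
    ⟪separatingDirection x p μ ν m, nplus d n i⟫ = ν * (gR x i - m) := by
  rw [separatingDirection, nplus, inner_mkG, Finset.sum_eq_single i (fun k _ hk => by simp [hk])
    (by simp)]
  simp
  ring

theorem inner_separatingDirection_nminus (i : Fin n) :
    ⟪separatingDirection x p μ ν m, nminus d n i⟫ = ν * (m - gR x i) := by
  rw [separatingDirection, nminus, inner_mkG, Finset.sum_eq_single i (fun k _ hk => by simp [hk])
    (by simp)]
  simp

theorem inner_separatingDirection_nij {i j : Fin n} (hij : i ≠ j) (hp : p i = p j)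
    (hact : ‖gC x i - gC x j‖ = gR x i + gR x j) (hpos : gR x i + gR x j ≠ 0) :
    ⟪separatingDirection x p μ ν m, nij x i j⟫ =
      (μ * (gR x i + gR x j) + ν * (gR x i + gR x j - 2 * m)) / 2 := by
  rw [separatingDirection, nij, inner_mkG, Finset.sum_eq_add_of_mem i j (Finset.mem_univ _)
    (Finset.mem_univ _) hij (fun k _ hk => by simp [hk.1, hk.2])]
  simp only [if_pos, if_neg hij.symm, real_inner_smul_left, real_inner_smul_right, hp]
  have hsq : ⟪gC x i - p j, gC x i - gC x j⟫ + ⟪gC x j - p j, gC x j - gC x i⟫ =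
      (gR x i + gR x j) ^ 2 := by
    rw [← neg_sub (gC x i), inner_neg_right, ← sub_eq_add_neg, ← inner_sub_left,
      sub_sub_sub_cancel_right, real_inner_self_eq_norm_sq, hact]
  field_simp
  linear_combination μ * hsq

theorem norm_sq_separatingDirection_le {A B : ℝ} (hA : ∀ i, ‖μ • (gC x i - p i)‖ ≤ A)
    (hB : ∀ i, |ν * (m - gR x i)| ≤ B) :
    ‖separatingDirection x p μ ν m‖ ^ 2 ≤ n * (A ^ 2 + B ^ 2) := by
  refine (PiLp.norm_sq_le_card_mul _ fun i => ?_).trans_eq (by rw [Fintype.card_fin])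
  rw [WithLp.prod_norm_sq_eq_of_L2]
  change ‖μ • (gC x i - p i)‖ ^ 2 + ‖ν * (m - gR x i)‖ ^ 2 ≤ _
  rw [Real.norm_eq_abs]
  gcongr
  exacts [hA i, hB i]


theorem norm_separatingDirection_le {rm rp : ℝ} (h0 : 0 < rm) (hr : rm < rp)
    (hx : x ∈ Ag d n rm rp)
    (hp : ∀ i, ‖gC x i - p i‖ ≤ 2 * rp * (n - 1)) :
    ‖separatingDirection x p (2 / rm) (2 / (rp - rm)) ((rp + rm) / 2)‖ ≤ 4 * rp / rm * n * √n := by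
  have hgap : 0 < rp - rm := sub_pos.mpr hr
  have hrp : 0 < rp := h0.trans hr
  have hR : 1 ≤ 4 * rp / rm := by rw [le_div_iff₀ h0]; linarith
  refine (sq_le_sq₀ (norm_nonneg _) (by positivity)).mp <|
    (norm_sq_separatingDirection_le x p _ _ _ (A := 4 * rp / rm * (n - 1)) (B := 1)
      (fun i => ?_) (fun i => ?_)).trans (by rw [one_pow]; exact natCast_mul_sq_add_one_le hR)
  · rw [norm_smul, Real.norm_of_nonneg (by positivity)]
    calc 2 / rm * ‖gC x i - p i‖ ≤ 2 / rm * (2 * rp * (n - 1)) := by gcongr; exact hp i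
      _ = 4 * rp / rm * (n - 1) := by ring
  · rw [abs_mul, abs_of_pos (by positivity), ← le_div_iff₀' (by positivity), abs_le]
    constructor <;> linarith [hx.1 i]

theorem one_le_inner_separatingDirection_nij {rm rp : ℝ} (h0 : 0 < rm) (hr : rm < rp)
    (hx : x ∈ Ag d n rm rp) {i j : Fin n} (hij : i ≠ j) (hp : p i = p j)
    (hact : ‖gC x i - gC x j‖ = gR x i + gR x j) :
    1 ≤ ⟪separatingDirection x p (2 / rm) (2 / (rp - rm)) ((rp + rm) / 2), nij x i j⟫ := by
  have ht : 2 * rm ≤ gR x i + gR x j := by linarith [(hx.1 i).1, (hx.1 j).1]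
  rw [inner_separatingDirection_nij x p _ _ _ hij hp hact (by linarith)]
  have hcentre : 2 * 2 ≤ 2 / rm * (gR x i + gR x j) := by
    rw [div_mul_eq_mul_div, le_div_iff₀ h0]; linarith
  have hradius : -2 ≤ 2 / (rp - rm) * (gR x i + gR x j - 2 * ((rp + rm) / 2)) := by
    rw [div_mul_eq_mul_div, le_div_iff₀ (sub_pos.mpr hr)]; linarith
  linarith

end Globules

theorem stmt_13_general (d n : ℕ) (rm rp : ℝ)
    (h0 : 0 < rm) (hr : rm < rp)
    (x : GConf d n) (hx : x ∈ frontier (Ag d n rm rp)) :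
    ∃ l : GConf d n, ‖l‖ = 1 ∧
      (∀ i j, i ≠ j → ‖gC x i - gC x j‖ = gR x i + gR x j →
        ⟪l, nij x i j⟫ ≥ rm / (4 * rp * n * Real.sqrt n)) ∧
      (∀ i, gR x i = rp → ⟪l, nplus d n i⟫ ≥ rm / (4 * rp * n * Real.sqrt n)) ∧
      (∀ i, gR x i = rm → ⟪l, nminus d n i⟫ ≥ rm / (4 * rp * n * Real.sqrt n)) := by
  have hxA : x ∈ Ag d n rm rp := (isClosed_Ag rm rp).frontier_subset hx
  have : Nontrivial (GConf d n) := nontrivial_of_mem_frontier hx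
  have hgap : 0 < rp - rm := sub_pos.mpr hr
  obtain ⟨p, hp_adj, hp_dist⟩ := exists_anchor_of_mem_Ag h0.le hxA
  obtain ⟨l, hl, hlw⟩ :=
    exists_norm_eq_one_le_inner (norm_separatingDirection_le x p h0 hr hxA hp_dist)
  have hK : 1 / (4 * rp / rm * n * √n) = rm / (4 * rp * n * √n) := by field_simp
  rw [hK] at hlw
  refine ⟨l, hl, fun i j hij hact => hlw _ ?_, fun i hi => hlw _ ?_, fun i hi => hlw _ ?_⟩
  · exact one_le_inner_separatingDirection_nij x p h0 hr hxA hij (hp_adj i j ⟨hij, hact⟩) hact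
  · rw [inner_separatingDirection_nplus, hi]
    field_simp
    linarith
  · rw [inner_separatingDirection_nminus, hi]
    field_simp
    linarith

/-- Compatibility for the globules model. For every `x ∈ ∂A_g` there is a
unit vector `l` whose inner products with all active constraint normals are at least
`r₋/(4 r₊ n √n)`. -/
theorem stmt_13 (d n : ℕ) (hd : 2 ≤ d) (hn : 1 ≤ n) (rm rp : ℝ)
    (h0 : 0 < rm) (hr : rm < rp)
    (x : GConf d n) (hx : x ∈ frontier (Ag d n rm rp)) :
    ∃ l : GConf d n, ‖l‖ = 1 ∧
      (∀ i j, i ≠ j → ‖gC x i - gC x j‖ = gR x i + gR x j →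
        ⟪l, nij x i j⟫ ≥ rm / (4 * rp * n * Real.sqrt n)) ∧
      (∀ i, gR x i = rp → ⟪l, nplus d n i⟫ ≥ rm / (4 * rp * n * Real.sqrt n)) ∧
      (∀ i, gR x i = rm → ⟪l, nminus d n i⟫ ≥ rm / (4 * rp * n * Real.sqrt n)) :=
  stmt_13_general d n rm rp h0 hr x hx
end
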